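/- Let M be a Garside monoid with atom set S. The quasi-centralizer QZ(M) = {g in M : gM = Mg} is a free commutative monoid, with the set {τ_s : s in S} (with repetitions removed) as a free basis, where τ_s is the smallest quasi-central element left-divisible by the atom s. -/

import Mathlib

/-- Left-divisibility in a monoid. -/
def LeftDvd {M : Type*} [Monoid M] (a b : M) : Prop := ∃ c, b = a * c

/-- Right-divisibility in a monoid. -/
def GRightDvd {M : Type*} [Monoid M] (a b : M) : Prop := ∃ c, b = c * a

/-- An element `g` of a monoid is quasi-central if `gM = Mg` as sets. -/
def QuasiCentral {M : Type*} [Monoid M] (g : M) : Prop :=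
  ∀ x : M, (∃ m, x = g * m) ↔ (∃ m, x = m * g)

/-- An atom of a monoid: a non-identity element that is not a product of two
non-identity elements. -/
def MonAtom {M : Type*} [Monoid M] (a : M) : Prop :=
  a ≠ 1 ∧ ∀ b c : M, a = b * c → b = 1 ∨ c = 1

/-- A Garside-monoid structure on a monoid `M`: `M` is cancellative, noetherian
for the factor relation, its left- and right-divisibility orders are lattices,
and it has a quasi-central Garside element `Δ` whose powers are left-divisible
by every element. -/
structure GarsideStruct (M : Type*) [Monoid M] where
  cancel_left : ∀ a b c : M, a * b = a * c → b = c
  cancel_right : ∀ a b c : M, b * a = c * a → b = c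
  wf : WellFounded (fun w w' : M => (∃ w1 w2, w' = w1 * w * w2) ∧ w ≠ w')
  lcmL : M → M → M
  lcmL_left : ∀ a b, LeftDvd a (lcmL a b)
  lcmL_right : ∀ a b, LeftDvd b (lcmL a b)
  lcmL_min : ∀ a b k, LeftDvd a k → LeftDvd b k → LeftDvd (lcmL a b) k
  gcdL : M → M → M
  gcdL_left : ∀ a b, LeftDvd (gcdL a b) a
  gcdL_right : ∀ a b, LeftDvd (gcdL a b) b
  gcdL_max : ∀ a b k, LeftDvd k a → LeftDvd k b → LeftDvd k (gcdL a b)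
  lcmR : M → M → M
  lcmR_left : ∀ a b, GRightDvd a (lcmR a b)
  lcmR_right : ∀ a b, GRightDvd b (lcmR a b)
  lcmR_min : ∀ a b k, GRightDvd a k → GRightDvd b k → GRightDvd (lcmR a b) k
  gcdR : M → M → M
  gcdR_left : ∀ a b, GRightDvd (gcdR a b) a
  gcdR_right : ∀ a b, GRightDvd (gcdR a b) b
  gcdR_max : ∀ a b k, GRightDvd k a → GRightDvd k b → GRightDvd k (gcdR a b)
  delta : M
  delta_qc : QuasiCentral delta
  delta_pow : ∀ g : M, ∃ n : ℕ, LeftDvd g (delta ^ n)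

/-!
Quasi-central elements form a submonoid that is closed under quotients by quasi-central divisors,
and left lcms of quasi-central elements are quasi-central, since by noetherianity they coincide
with the right lcms. Each `τ t` (for an atom `t`) is an atom of this submonoid: if a quasi-central
`d ≠ 1` with `d ∣ τ t` were not divisible by `t`, then conjugation by `d` sends `t` to an atom `t'`
with `lcm(t, d) = d t'`, whence `τ t = d τ t' f = τ t d f` and `d = 1`. So for `τ s ≠ τ t` the lcm
of `τ s` and `τ t` equals both `τ s τ t` and `τ t τ s`: the `τ s` commute and behave like primes.
Factorizations then exist by noetherian induction and are unique up to order, as in a unique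
factorization monoid.
-/

section

variable {M : Type*} [Monoid M]

theorem dvd_of_mul_dvd_mul_left [IsLeftCancelMul M] {a b c : M} (h : a * b ∣ a * c) : b ∣ c := by
  obtain ⟨d, hd⟩ := h
  exact ⟨d, mul_left_cancel (by rw [hd, mul_assoc])⟩

theorem MonAtom.eq_one_or_eq_of_dvd {a b : M} (ha : MonAtom a) (hb : b ∣ a) : b = 1 ∨ b = a := by
  obtain ⟨c, rfl⟩ := hb
  rcases ha.2 b c rfl with h | rfl
  · exact Or.inl h
  · exact Or.inr (mul_one b).symm

namespace QuasiCentral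

theorem exists_mul_eq_mul {g : M} (hg : QuasiCentral g) (m : M) : ∃ m', g * m = m' * g :=
  (hg _).1 ⟨m, rfl⟩

theorem dvd_mul_left {g : M} (hg : QuasiCentral g) (m : M) : g ∣ m * g :=
  (hg _).2 ⟨m, rfl⟩

theorem mul {a b : M} (ha : QuasiCentral a) (hb : QuasiCentral b) : QuasiCentral (a * b) := by
  intro x
  constructor
  · rintro ⟨m, rfl⟩
    obtain ⟨m₁, h₁⟩ := hb.exists_mul_eq_mul m
    obtain ⟨m₂, h₂⟩ := ha.exists_mul_eq_mul m₁
    exact ⟨m₂, by rw [mul_assoc, h₁, ← mul_assoc, h₂, mul_assoc]⟩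
  · rintro ⟨m, rfl⟩
    obtain ⟨m₁, h₁⟩ := ha.dvd_mul_left m
    obtain ⟨m₂, h₂⟩ := hb.dvd_mul_left m₁
    exact ⟨m₂, by rw [← mul_assoc, h₁, mul_assoc, h₂, ← mul_assoc]⟩

theorem mul_dvd_mul_right {h a b : M} (hh : QuasiCentral h) (hab : a ∣ b) : a * h ∣ b * h := by
  obtain ⟨c, rfl⟩ := hab
  obtain ⟨c', hc'⟩ := hh.dvd_mul_left c
  exact ⟨c', by rw [mul_assoc, hc', ← mul_assoc]⟩

theorem of_mul_left [IsLeftCancelMul M] {a c : M} (ha : QuasiCentral a)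
    (hac : QuasiCentral (a * c)) : QuasiCentral c := by
  intro x
  constructor
  · rintro ⟨m, rfl⟩
    obtain ⟨m₁, h₁⟩ := hac.exists_mul_eq_mul m
    obtain ⟨m₂, h₂⟩ := ha.dvd_mul_left m₁
    exact ⟨m₂, mul_left_cancel (a := a) (by simp only [← mul_assoc, h₁, h₂])⟩
  · rintro ⟨m, rfl⟩
    obtain ⟨m₁, h₁⟩ := ha.exists_mul_eq_mul m
    obtain ⟨m₂, h₂⟩ := hac.dvd_mul_left m₁
    refine ⟨m₂, mul_left_cancel (a := a) ?_⟩
    simp only [← mul_assoc] at h₂ ⊢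
    rw [h₁, h₂]

theorem of_mul_right [IsRightCancelMul M] {a c : M} (hc : QuasiCentral c)
    (hac : QuasiCentral (a * c)) : QuasiCentral a := by
  intro x
  constructor
  · rintro ⟨m, rfl⟩
    obtain ⟨m₁, h₁⟩ := hc.dvd_mul_left m
    obtain ⟨m₂, h₂⟩ := hac.exists_mul_eq_mul m₁
    refine ⟨m₂, mul_right_cancel (b := c) ?_⟩
    simp only [mul_assoc] at h₂ ⊢
    rw [h₁, h₂]
  · rintro ⟨m, rfl⟩
    obtain ⟨m₁, h₁⟩ := hac.dvd_mul_left m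
    obtain ⟨m₂, h₂⟩ := hc.exists_mul_eq_mul m₁
    exact ⟨m₂, mul_right_cancel (b := c) (by simp only [mul_assoc, h₁, h₂])⟩

end QuasiCentral

theorem MonAtom.of_mul_eq_mul [IsCancelMul M] {t d t' : M} (ht : MonAtom t)
    (hd : QuasiCentral d) (h : t * d = d * t') : MonAtom t' := by
  refine ⟨?_, fun u v huv => ?_⟩
  · rintro rfl
    exact ht.1 (mul_right_cancel (b := d) (by rw [h, mul_one, one_mul]))
  · obtain ⟨u', hu'⟩ := hd.exists_mul_eq_mul u
    obtain ⟨v', hv'⟩ := hd.exists_mul_eq_mul v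
    have ht_eq : t = u' * v' :=
      mul_right_cancel (b := d) (by rw [h, huv, ← mul_assoc, hu', mul_assoc, hv', mul_assoc])
    refine (ht.2 u' v' ht_eq).imp (fun hu => ?_) (fun hv => ?_)
    · exact mul_left_cancel (a := d) (by rw [hu', hu, one_mul, mul_one])
    · exact mul_left_cancel (a := d) (by rw [hv', hv, one_mul, mul_one])

namespace GarsideStruct

theorem isCancelMul (GS : GarsideStruct M) : IsCancelMul M where
  mul_left_cancel a _ _ := GS.cancel_left a _ _
  mul_right_cancel a _ _ := GS.cancel_right a _ _

theorem eq_one_of_eq_mul_mul (GS : GarsideStruct M) {x u v : M} (h : x = u * x * v) :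
    u = 1 ∧ v = 1 := by
  have hux : u * x = x := by
    by_contra hne
    exact GS.wf.asymmetric x (u * x) ⟨⟨u, 1, (mul_one _).symm⟩, Ne.symm hne⟩
      ⟨⟨1, v, by rw [one_mul]; exact h⟩, hne⟩
  obtain rfl : u = 1 := GS.cancel_right x u 1 (by rw [hux, one_mul])
  rw [one_mul] at h
  exact ⟨rfl, GS.cancel_left x v 1 (by rw [mul_one, ← h])⟩

theorem eq_one_of_mul_right (GS : GarsideStruct M) {a b : M} (h : a * b = 1) : a = 1 :=
  (GS.eq_one_of_eq_mul_mul (x := 1) (u := a) (v := b) (by rw [mul_one, h])).1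

theorem eq_one_of_mul_dvd_self (GS : GarsideStruct M) {a b : M} (h : a * b ∣ a) : b = 1 := by
  obtain ⟨c, hc⟩ := h
  have hbc : b * c = 1 := (GS.eq_one_of_eq_mul_mul (x := a) (u := 1) (v := b * c)
    (by rwa [one_mul, ← mul_assoc])).2
  exact GS.eq_one_of_mul_right hbc

theorem dvd_antisymm (GS : GarsideStruct M) {a b : M} (hab : a ∣ b) (hba : b ∣ a) : a = b := by
  obtain ⟨c, rfl⟩ := hab
  rw [GS.eq_one_of_mul_dvd_self hba, mul_one]

theorem exists_monAtom_dvd (GS : GarsideStruct M) {g : M} (hg : g ≠ 1) :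
    ∃ s, MonAtom s ∧ s ∣ g := by
  induction g using GS.wf.induction with
  | _ g ih =>
  by_cases hatom : MonAtom g
  · exact ⟨g, hatom, dvd_rfl⟩
  unfold MonAtom at hatom
  push Not at hatom
  obtain ⟨b, c, rfl, hb, hc⟩ := hatom hg
  have hfactor : (∃ w₁ w₂, b * c = w₁ * b * w₂) ∧ b ≠ b * c :=
    ⟨⟨1, c, by rw [one_mul]⟩, fun h => hc (GS.cancel_left b c 1 (by rw [← h, mul_one]))⟩
  obtain ⟨s, hs, hsb⟩ := ih b hfactor hb
  exact ⟨s, hs, hsb.trans (dvd_mul_right b c)⟩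

theorem lcmL_dvd_iff (GS : GarsideStruct M) {a b k : M} : GS.lcmL a b ∣ k ↔ a ∣ k ∧ b ∣ k :=
  ⟨fun h => ⟨dvd_trans (GS.lcmL_left a b) h, dvd_trans (GS.lcmL_right a b) h⟩,
    fun h => GS.lcmL_min a b k h.1 h.2⟩

theorem lcmR_rightDvd_iff (GS : GarsideStruct M) {a b k : M} :
    GRightDvd (GS.lcmR a b) k ↔ GRightDvd a k ∧ GRightDvd b k := by
  refine ⟨fun ⟨c, hc⟩ => ?_, fun h => GS.lcmR_min a b k h.1 h.2⟩
  obtain ⟨x, hx⟩ := GS.lcmR_left a b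
  obtain ⟨y, hy⟩ := GS.lcmR_right a b
  exact ⟨⟨c * x, by rw [hc, hx, mul_assoc]⟩, ⟨c * y, by rw [hc, hy, mul_assoc]⟩⟩

theorem lcmL_comm (GS : GarsideStruct M) (a b : M) : GS.lcmL a b = GS.lcmL b a :=
  GS.dvd_antisymm (GS.lcmL_min _ _ _ (GS.lcmL_right b a) (GS.lcmL_left b a))
    (GS.lcmL_min _ _ _ (GS.lcmL_right a b) (GS.lcmL_left a b))

theorem quasiCentral_lcmL (GS : GarsideStruct M) {a b : M} (ha : QuasiCentral a)
    (hb : QuasiCentral b) : QuasiCentral (GS.lcmL a b) := by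
  have hLR : ∀ k, GS.lcmL a b ∣ k ↔ GRightDvd (GS.lcmR a b) k := fun k => by
    rw [GS.lcmL_dvd_iff, GS.lcmR_rightDvd_iff]
    exact and_congr (ha k) (hb k)
  obtain ⟨c, hc⟩ := (hLR _).2 ⟨1, (one_mul _).symm⟩
  obtain ⟨d, hd⟩ := (hLR _).1 dvd_rfl
  have hc1 : c = 1 := (GS.eq_one_of_eq_mul_mul (x := GS.lcmL a b) (u := d) (v := c)
    (by rw [mul_assoc, ← hc]; exact hd)).2
  have hL : GS.lcmL a b = GS.lcmR a b := by rw [hc, hc1, mul_one]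
  intro k
  rw [← hL] at hLR
  exact hLR k

theorem lcmL_eq_mul_of_not_dvd (GS : GarsideStruct M) {t d t' : M} (ht' : MonAtom t')
    (hnd : ¬ t ∣ d) (h : t * d = d * t') : GS.lcmL t d = d * t' := by
  have := GS.isCancelMul
  obtain ⟨u, hu⟩ := GS.lcmL_right t d
  have hL : GS.lcmL t d ∣ d * t' := GS.lcmL_min t d _ ⟨d, h.symm⟩ (dvd_mul_right d t')
  rw [hu] at hL
  rcases ht'.eq_one_or_eq_of_dvd (dvd_of_mul_dvd_mul_left hL) with rfl | rfl
  · have htL : t ∣ GS.lcmL t d := GS.lcmL_left t d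
    rw [hu, mul_one] at htL
    exact absurd htL hnd
  · exact hu

end GarsideStruct

structure IsQuasiCentralHull (τ : M → M) : Prop where
  quasiCentral : ∀ g, QuasiCentral (τ g)
  dvd : ∀ g, g ∣ τ g
  dvd_of_dvd : ∀ {g h}, QuasiCentral h → g ∣ h → τ g ∣ h

def hullAtoms (τ : M → M) : Set M := {x | ∃ s, MonAtom s ∧ x = τ s}

namespace IsQuasiCentralHull

variable {τ : M → M} (hτ : IsQuasiCentralHull τ)
include hτ

theorem ne_one (GS : GarsideStruct M) {s : M} (hs : s ≠ 1) : τ s ≠ 1 := by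
  obtain ⟨c, hc⟩ := hτ.dvd s
  exact fun h => hs (GS.eq_one_of_mul_right (hc.symm.trans h))

theorem mul_hull_dvd [IsLeftCancelMul M] {h y q : M} (hh : QuasiCentral h)
    (hq : QuasiCentral q) (hhy : h * y ∣ q) : h * τ y ∣ q := by
  obtain ⟨f, rfl⟩ := hhy
  have hyf : QuasiCentral (y * f) := hh.of_mul_left (by rwa [← mul_assoc])
  simpa only [mul_assoc] using mul_dvd_mul_left h (hτ.dvd_of_dvd hyf (dvd_mul_right y f))

theorem hull_mul_dvd [IsRightCancelMul M] {h x q : M} (hh : QuasiCentral h)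
    (hq : QuasiCentral q) (hxh : x * h ∣ q) : τ x * h ∣ q := by
  obtain ⟨c, rfl⟩ := hxh
  obtain ⟨c', hc'⟩ := hh.exists_mul_eq_mul c
  have hq' : x * h * c = x * c' * h := by simp only [mul_assoc, hc']
  rw [hq'] at hq ⊢
  exact hh.mul_dvd_mul_right (hτ.dvd_of_dvd (hh.of_mul_right hq) (dvd_mul_right x c'))

theorem hull_mul_eq_mul_hull (GS : GarsideStruct M) {h x y : M} (hh : QuasiCentral h)
    (hxy : x * h = h * y) : τ x * h = h * τ y := by
  have := GS.isCancelMul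
  refine GS.dvd_antisymm (hτ.hull_mul_dvd hh (hh.mul (hτ.quasiCentral y)) ?_)
    (hτ.mul_hull_dvd hh ((hτ.quasiCentral x).mul hh) ?_)
  · rw [hxy]
    exact mul_dvd_mul_left h (hτ.dvd y)
  · rw [← hxy]
    exact hh.mul_dvd_mul_right (hτ.dvd x)

theorem eq_one_or_eq_of_dvd (GS : GarsideStruct M) {t d : M} (ht : MonAtom t)
    (hd : QuasiCentral d) (hdt : d ∣ τ t) : d = 1 ∨ d = τ t := by
  have := GS.isCancelMul
  by_cases htd : t ∣ d
  · exact Or.inr (GS.dvd_antisymm hdt (hτ.dvd_of_dvd hd htd))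
  left
  obtain ⟨t', ht'⟩ := hd.dvd_mul_left t
  have hL : GS.lcmL t d ∣ τ t := GS.lcmL_min t d _ (hτ.dvd t) hdt
  rw [GS.lcmL_eq_mul_of_not_dvd (ht.of_mul_eq_mul hd ht') htd ht'] at hL
  obtain ⟨e, he⟩ := hL
  have hte : QuasiCentral (t' * e) :=
    hd.of_mul_left (by rw [← mul_assoc, ← he]; exact hτ.quasiCentral t)
  apply GS.eq_one_of_mul_dvd_self (a := τ t)
  rw [hτ.hull_mul_eq_mul_hull GS hd ht', he, mul_assoc]
  exact mul_dvd_mul_left d (hτ.dvd_of_dvd hte (dvd_mul_right t' e))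

theorem ne_one_of_mem (GS : GarsideStruct M) {x : M} (hx : x ∈ hullAtoms τ) : x ≠ 1 := by
  obtain ⟨s, hs, rfl⟩ := hx
  exact hτ.ne_one GS hs.1

theorem lcmL_eq_mul (GS : GarsideStruct M) {x y : M} (hx : x ∈ hullAtoms τ)
    (hy : y ∈ hullAtoms τ) (hxy : x ≠ y) : GS.lcmL x y = x * y := by
  have := GS.isCancelMul
  obtain ⟨s, hs, rfl⟩ := hx
  obtain ⟨t, ht, rfl⟩ := hy
  obtain ⟨z, hz⟩ := GS.lcmL_left (τ s) (τ t)
  have hzq : QuasiCentral z := (hτ.quasiCentral s).of_mul_left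
    (hz ▸ GS.quasiCentral_lcmL (hτ.quasiCentral s) (hτ.quasiCentral t))
  have hzt : z ∣ τ t := by
    have hL : GS.lcmL (τ s) (τ t) ∣ τ s * τ t :=
      GS.lcmL_min _ _ _ (dvd_mul_right _ _) ((hτ.quasiCentral t).dvd_mul_left _)
    rw [hz] at hL
    exact dvd_of_mul_dvd_mul_left hL
  rcases hτ.eq_one_or_eq_of_dvd GS ht hzq hzt with rfl | rfl
  · have hts : τ t ∣ τ s := by
      rw [← mul_one (τ s), ← hz]
      exact GS.lcmL_right _ _
    refine absurd ?_ hxy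
    exact ((hτ.eq_one_or_eq_of_dvd GS hs (hτ.quasiCentral t) hts).resolve_left
      (hτ.ne_one GS ht.1)).symm
  · exact hz

theorem commute_of_mem (GS : GarsideStruct M) {x y : M} (hx : x ∈ hullAtoms τ)
    (hy : y ∈ hullAtoms τ) : Commute x y := by
  by_cases hxy : x = y
  · exact hxy ▸ Commute.refl x
  calc x * y = GS.lcmL x y := (hτ.lcmL_eq_mul GS hx hy hxy).symm
    _ = GS.lcmL y x := GS.lcmL_comm x y
    _ = y * x := hτ.lcmL_eq_mul GS hy hx (Ne.symm hxy)

theorem eq_or_dvd_of_dvd_mul (GS : GarsideStruct M) {x y c : M} (hx : x ∈ hullAtoms τ)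
    (hy : y ∈ hullAtoms τ) (h : x ∣ y * c) : x = y ∨ x ∣ c := by
  have := GS.isCancelMul
  refine or_iff_not_imp_left.2 fun hxy => dvd_of_mul_dvd_mul_left (a := y) ?_
  rw [← hτ.lcmL_eq_mul GS hy hx (Ne.symm hxy)]
  exact GS.lcmL_min _ _ _ (dvd_mul_right y c) h

theorem mem_of_dvd_prod (GS : GarsideStruct M) {x : M} {L : List M} (hx : x ∈ hullAtoms τ)
    (hL : ∀ y ∈ L, y ∈ hullAtoms τ) (h : x ∣ L.prod) : x ∈ L := by
  induction L with
  | nil =>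
    obtain ⟨c, hc⟩ := h
    rw [List.prod_nil] at hc
    exact absurd (GS.eq_one_of_mul_right hc.symm) (hτ.ne_one_of_mem GS hx)
  | cons y L ih =>
    rw [List.forall_mem_cons] at hL
    rw [List.prod_cons] at h
    rcases hτ.eq_or_dvd_of_dvd_mul GS hx hL.1 h with rfl | h
    · exact List.mem_cons_self
    · exact List.mem_cons_of_mem y (ih hL.2 h)

theorem exists_prod_eq (GS : GarsideStruct M) {g : M} (hg : QuasiCentral g) :
    ∃ L : List M, (∀ x ∈ L, x ∈ hullAtoms τ) ∧ g = L.prod := by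
  have := GS.isCancelMul
  induction g using GS.wf.induction with
  | _ g ih =>
  by_cases hg1 : g = 1
  · exact ⟨[], by simp, by simp [hg1]⟩
  obtain ⟨s, hs, hsg⟩ := GS.exists_monAtom_dvd hg1
  obtain ⟨g', rfl⟩ := hτ.dvd_of_dvd hg hsg
  have hne : g' ≠ τ s * g' := fun h =>
    hτ.ne_one GS hs.1 (mul_right_cancel (by rw [one_mul]; exact h.symm))
  obtain ⟨L, hL, rfl⟩ :=
    ih g' ⟨⟨τ s, 1, (mul_one _).symm⟩, hne⟩ ((hτ.quasiCentral s).of_mul_left hg)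
  exact ⟨τ s :: L, List.forall_mem_cons.2 ⟨⟨s, hs, rfl⟩, hL⟩, List.prod_cons.symm⟩

theorem perm_of_prod_eq (GS : GarsideStruct M) {L₁ L₂ : List M}
    (h₁ : ∀ x ∈ L₁, x ∈ hullAtoms τ) (h₂ : ∀ x ∈ L₂, x ∈ hullAtoms τ)
    (h : L₁.prod = L₂.prod) : L₁.Perm L₂ := by
  classical
  have := GS.isCancelMul
  induction L₁ generalizing L₂ with
  | nil =>
    cases L₂ with
    | nil => rfl
    | cons y L₂ =>
      rw [List.prod_nil, List.prod_cons] at h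
      exact absurd (GS.eq_one_of_mul_right h.symm) (hτ.ne_one_of_mem GS (h₂ y List.mem_cons_self))
  | cons x L₁ ih =>
    rw [List.forall_mem_cons] at h₁
    have hx : x ∈ L₂ := hτ.mem_of_dvd_prod GS h₁.1 h₂ ⟨L₁.prod, by rw [← h, List.prod_cons]⟩
    have hperm := List.perm_cons_erase hx
    have hprod : L₂.prod = x * (L₂.erase x).prod := by
      rw [hperm.prod_eq' (List.pairwise_of_forall_mem_list fun a ha b hb =>
        hτ.commute_of_mem GS (h₂ a ha) (h₂ b hb)), List.prod_cons]
    refine ((ih h₁.2 (fun y hy => h₂ y (List.mem_of_mem_erase hy)) ?_).cons x).trans hperm.symm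
    exact mul_left_cancel (by rw [← hprod, ← h, List.prod_cons])

theorem commute_of_quasiCentral (GS : GarsideStruct M) {a b : M} (ha : QuasiCentral a)
    (hb : QuasiCentral b) : Commute a b := by
  obtain ⟨La, hLa, rfl⟩ := hτ.exists_prod_eq GS ha
  obtain ⟨Lb, hLb, rfl⟩ := hτ.exists_prod_eq GS hb
  exact Commute.list_prod_left _ _ fun x hx => Commute.list_prod_right _ _ fun y hy =>
    hτ.commute_of_mem GS (hLa x hx) (hLb y hy)

end IsQuasiCentralHull

end

/-- in a Garside monoid, the quasi-centralizer is a free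
commutative monoid with free basis the set `{τ_s : s an atom}` (repetitions
removed): quasi-central elements commute, and every quasi-central element is
a product of elements `τ_s`, uniquely up to permutation. -/
theorem stmt_8 (M : Type*) [Monoid M] (GS : GarsideStruct M)
    (τ : M → M)
    (hτqc : ∀ g, QuasiCentral (τ g))
    (hτdvd : ∀ g, LeftDvd g (τ g))
    (hτmin : ∀ g h, QuasiCentral h → LeftDvd g h → LeftDvd (τ g) h) :
    (∀ a b : M, QuasiCentral a → QuasiCentral b → a * b = b * a) ∧
    ∀ g : M, QuasiCentral g →
      (∃ L : List M, (∀ x ∈ L, ∃ s, MonAtom s ∧ x = τ s) ∧ g = L.prod) ∧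
      (∀ L₁ L₂ : List M,
        (∀ x ∈ L₁, ∃ s, MonAtom s ∧ x = τ s) →
        (∀ x ∈ L₂, ∃ s, MonAtom s ∧ x = τ s) →
        g = L₁.prod → g = L₂.prod → L₁.Perm L₂) := by
  have hτ : IsQuasiCentralHull τ := ⟨hτqc, hτdvd, hτmin _ _⟩
  refine ⟨fun a b ha hb => hτ.commute_of_quasiCentral GS ha hb,
    fun g hg => ⟨hτ.exists_prod_eq GS hg, ?_⟩⟩
  rintro L₁ L₂ h₁ h₂ rfl h
  exact hτ.perm_of_prod_eq GS h₁ h₂ h
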